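/- arXiv:1904.00527 — 4 statements merged into one kernel-verified Lean document; each statement's English description precedes it below -/
import Mathlib

section
/- In a Coxeter group W, for any x, y ∈ W the set {xv : v ≤ y} contains a unique minimal element in Bruhat order, denoted x ◁ y (the downwards Demazure product). -/
variable {B W : Type*} [Group W]

/-- `t` is a reflection of the Coxeter system `cs`, i.e. a conjugate of a simple reflection. -/
def IsCoxReflection {M : CoxeterMatrix B} (cs : CoxeterSystem M W) (t : W) : Prop :=
  ∃ (g : W) (i : B), t = g * cs.simple i * g⁻¹

/-- One step in the Bruhat order: multiply on the right by a reflection, increasing length. -/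
def BruhatStep {M : CoxeterMatrix B} (cs : CoxeterSystem M W) (u w : W) : Prop :=
  cs.length u < cs.length w ∧ ∃ t : W, IsCoxReflection cs t ∧ w = u * t

/-- The Bruhat order on a Coxeter group: reflexive-transitive closure of `BruhatStep`. -/
def BruhatLE {M : CoxeterMatrix B} (cs : CoxeterSystem M W) : W → W → Prop :=
  Relation.ReflTransGen (BruhatStep cs)

/-!
In Tits' sign representation `s_i` acts on `W × ZMod 2` by
`(t, a) ↦ (s_i * t * s_i, a + [t = s_i])`, so a word `ω` sends `(t, a)` to `(t', a + c)`, where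
`t' = π ω * t * (π ω)⁻¹` and `c` counts the occurrences of `t'` in the left inversion sequence of `ω`.
Hence the parity of that count depends only on the product of the word, which yields the strong
exchange property. For a Bruhat step `u ⋖ w` and a simple reflection `s` it gives `u = w s` or
`u s ⋖ w s`; hence `w ↦ min (w, w s)` and `w ↦ max (w, w s)` are monotone, and the least element
of `x * [≤ y]` is obtained by induction on the length of `y`.
-/

open List

namespace CoxeterSystem

open scoped Classical

variable {M : CoxeterMatrix B} (cs : CoxeterSystem M W)

local prefix:100 "ℓ" => cs.length
local prefix:100 "π" => cs.wordProd
local prefix:100 "lis" => cs.leftInvSeq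
local prefix:100 "ris" => cs.rightInvSeq

lemma simple_mul_mul_simple_eq_simple_iff (i : B) (w : W) :
    cs.simple i * w * cs.simple i = cs.simple i ↔ w = cs.simple i := by
  constructor
  · intro h
    simpa [mul_assoc] using congrArg (fun v => cs.simple i * v * cs.simple i) h
  · rintro rfl
    simp

noncomputable def signFlip (i : B) : Equiv.Perm (W × ZMod 2) :=
  Function.Involutive.toPerm
    (fun p => (cs.simple i * p.1 * cs.simple i, p.2 + if p.1 = cs.simple i then 1 else 0))
    (by
      rintro ⟨w, a⟩
      simp only [simple_mul_mul_simple_eq_simple_iff, Prod.mk.injEq]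
      refine ⟨by simp [mul_assoc], ?_⟩
      split_ifs <;> simp [add_assoc, ZModModule.add_self])

lemma count_map_conj (g t : W) (L : List W) :
    count t (L.map (MulAut.conj g)) = count (g⁻¹ * t * g) L := by
  conv_lhs => rw [show t = MulAut.conj g (g⁻¹ * t * g) by simp [mul_assoc]]
  exact count_map_of_injective _ _ (MulAut.conj g).injective _

lemma prod_map_signFlip_apply (ω : List B) (t : W) (a : ZMod 2) :
    (ω.map cs.signFlip).prod (t, a) =
      (π ω * t * (π ω)⁻¹, a + count (π ω * t * (π ω)⁻¹) (lis ω)) := by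
  induction ω with
  | nil => simp
  | cons i ω ih =>
    rw [map_cons, prod_cons, Equiv.Perm.mul_apply, ih]
    set u := π ω * t * (π ω)⁻¹
    have hu : π (i :: ω) * t * (π (i :: ω))⁻¹ = cs.simple i * u * cs.simple i := by
      simp [u, wordProd_cons, mul_assoc]
    rw [hu, leftInvSeq, count_cons, count_map_conj]
    simp only [beq_iff_eq, @eq_comm _ (cs.simple i), simple_mul_mul_simple_eq_simple_iff]
    simp [signFlip, mul_assoc, add_assoc]

lemma prod_map_alternatingWord_two_mul {G : Type*} [Monoid G] (f : B → G) (i j : B) (m : ℕ) :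
    ((alternatingWord i j (2 * m)).map f).prod = (f i * f j) ^ m := by
  induction m with
  | zero => simp [alternatingWord]
  | succ m ih =>
    rw [show 2 * (m + 1) = 2 * m + 1 + 1 by ring, alternatingWord_succ', alternatingWord_succ',
      if_neg (by simp [parity_simps]), if_pos (even_two_mul m)]
    simp [ih, ← mul_assoc, pow_succ']

/-- The entries of this inversion sequence repeat with period `M i j`. -/
lemma even_count_leftInvSeq_alternatingWord (i j : B) (t : W) :
    Even (count t (lis (alternatingWord i j (2 * M i j)))) := by
  set L := lis (alternatingWord i j (2 * M i j))
  have hL : L.length = 2 * M i j := by simp [L]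
  have hget (k : ℕ) (hk : k < 2 * M i j) :
      L[k] = cs.simple i * (cs.simple j * cs.simple i) ^ k := by
    simp only [L, getElem_leftInvSeq_alternatingWord cs i j _ k hk, prod_alternatingWord_eq_mul_pow]
    simp [Nat.mul_add_div]
  have halves : L.drop (M i j) = L.take (M i j) := by
    apply ext_getElem (by simp [hL]; omega)
    intro k h₁ h₂
    simp only [getElem_drop, getElem_take]
    simp only [length_drop, hL] at h₁
    rw [hget _ (by omega), hget _ (by omega), pow_add, simple_mul_simple_pow', one_mul]
  rw [← take_append_drop (M i j) L, halves, count_append]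
  exact ⟨_, rfl⟩

lemma isLiftable_signFlip : M.IsLiftable cs.signFlip := by
  intro i j
  ext1 ⟨t, a⟩
  rw [← prod_map_alternatingWord_two_mul, prod_map_signFlip_apply,
    (even_count_leftInvSeq_alternatingWord cs i j _).natCast_zmod_two]
  simp [prod_alternatingWord_eq_mul_pow, simple_mul_simple_pow]

noncomputable def signRep : W →* Equiv.Perm (W × ZMod 2) :=
  cs.lift ⟨cs.signFlip, cs.isLiftable_signFlip⟩

lemma signRep_wordProd (ω : List B) : cs.signRep (π ω) = (ω.map cs.signFlip).prod := by
  rw [wordProd, map_list_prod, map_map]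
  congr 1
  exact map_congr_left fun i _ => cs.lift_apply_simple cs.isLiftable_signFlip i

lemma count_leftInvSeq_congr {ω₁ ω₂ : List B} (h : π ω₁ = π ω₂) (t : W) :
    (count t (lis ω₁) : ZMod 2) = count t (lis ω₂) := by
  have hprod : (ω₁.map cs.signFlip).prod = (ω₂.map cs.signFlip).prod := by
    rw [← signRep_wordProd, ← signRep_wordProd, h]
  have key := congrArg (fun g => (g ((π ω₁)⁻¹ * t * π ω₁, 0)).2) hprod
  simp only [prod_map_signFlip_apply, ← h] at key
  simpa [mul_assoc] using key

lemma leftInvSeq_append (ω ω' : List B) :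
    lis (ω ++ ω') = lis ω ++ (lis ω').map (MulAut.conj (π ω)) := by
  induction ω with
  | nil => simp
  | cons i ω ih =>
    simp [leftInvSeq, ih, wordProd_cons, map_map, Function.comp_def, MulAut.conj_apply, mul_assoc]

lemma count_leftInvSeq_append (t : W) (ω ω' : List B) :
    count t (lis (ω ++ ω')) = count t (lis ω) + count ((π ω)⁻¹ * t * π ω) (lis ω') := by
  rw [leftInvSeq_append, count_append, count_map_conj]

/-- In `γ ++ k :: γ.reverse` the reflection occurs once at the centre, and the two outer halves
together contribute the count of `γ ++ γ.reverse`, a word for `1`. -/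
lemma count_leftInvSeq_palindrome (γ : List B) (k : B) :
    (count (π (γ ++ k :: γ.reverse)) (lis (γ ++ k :: γ.reverse)) : ZMod 2) = 1 := by
  set t := π (γ ++ k :: γ.reverse)
  have ht : (π γ)⁻¹ * t * π γ = cs.simple k := by
    simp [t, wordProd_append, wordProd_cons, mul_assoc]
  have hcancel := cs.count_leftInvSeq_congr (ω₁ := γ ++ γ.reverse) (ω₂ := []) (by
    simp [wordProd_append]) t
  rw [count_leftInvSeq_append, ht, leftInvSeq_nil, count_nil] at hcancel
  rw [count_leftInvSeq_append, ht, leftInvSeq, count_cons, count_map_conj, inv_simple,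
    simple_mul_simple_self, one_mul, BEq.rfl, if_pos rfl]
  push_cast at hcancel ⊢
  linear_combination hcancel

theorem mem_leftInvSeq_of_length_mul_lt {ω : List B} {t : W} (ht : cs.IsReflection t)
    (hlt : ℓ (t * π ω) < ℓ (π ω)) : t ∈ lis ω := by
  obtain ⟨g, k, htg⟩ := id ht
  obtain ⟨γ, rfl⟩ := cs.wordProd_surjective g
  obtain ⟨σ, hσ, hσω⟩ := cs.exists_isReduced (t * π ω)
  have hτ : π (γ ++ k :: γ.reverse) = t := by
    simp [htg, wordProd_append, wordProd_cons, mul_assoc]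
  have hodd := cs.count_leftInvSeq_palindrome γ k
  rw [hτ] at hodd
  have hσ₀ : count t (lis σ) = 0 := by
    refine count_eq_zero.mpr fun hmem => ?_
    have := (cs.isLeftInversion_of_mem_leftInvSeq hσ hmem).2
    rw [← hσω, ← mul_assoc, ht.mul_self, one_mul] at this
    omega
  have hsum := cs.count_leftInvSeq_congr (ω₁ := γ ++ k :: γ.reverse ++ σ) (ω₂ := ω)
    (by rw [wordProd_append, hτ, ← hσω, ← mul_assoc, ht.mul_self, one_mul]) t
  rw [count_leftInvSeq_append, hτ, inv_mul_cancel, one_mul, hσ₀, add_zero, hodd] at hsum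
  refine count_pos_iff.mp (Nat.pos_of_ne_zero fun h => ?_)
  rw [h, Nat.cast_zero] at hsum
  exact one_ne_zero hsum

/-- The strong exchange property. -/
theorem mem_rightInvSeq_of_length_mul_lt {ω : List B} {t : W} (ht : cs.IsReflection t)
    (hlt : ℓ (π ω * t) < ℓ (π ω)) : t ∈ ris ω := by
  have hrev : ℓ (t * π ω.reverse) < ℓ (π ω.reverse) := by
    rwa [wordProd_reverse, ← ht.inv, ← mul_inv_rev, length_inv, length_inv]
  simpa [leftInvSeq_reverse] using cs.mem_leftInvSeq_of_length_mul_lt ht hrev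

theorem exists_wordProd_eraseIdx_eq_mul {ω : List B} {t : W} (ht : cs.IsReflection t)
    (hlt : ℓ (π ω * t) < ℓ (π ω)) : ∃ j < ω.length, π (ω.eraseIdx j) = π ω * t := by
  obtain ⟨j, hj, rfl⟩ := mem_iff_getElem.mp (cs.mem_rightInvSeq_of_length_mul_lt ht hlt)
  refine ⟨j, by simpa using hj, ?_⟩
  rw [← wordProd_mul_getD_rightInvSeq, getD_eq_getElem]

lemma length_le_of_bruhatLE {u w : W} (h : BruhatLE cs u w) : ℓ u ≤ ℓ w := by
  induction h with
  | refl => rfl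
  | tail _ hstep ih => exact ih.trans hstep.1.le

lemma eq_of_bruhatLE_of_bruhatLE {u w : W} (huw : BruhatLE cs u w) (hwu : BruhatLE cs w u) :
    u = w := by
  rcases Relation.ReflTransGen.cases_tail huw with rfl | ⟨c, huc, hcw⟩
  · rfl
  · have := cs.length_le_of_bruhatLE huc
    have := cs.length_le_of_bruhatLE hwu
    have := hcw.1
    omega

lemma bruhatLE_mul_simple {w : W} {i : B} (h : ℓ w < ℓ (w * cs.simple i)) :
    BruhatLE cs w (w * cs.simple i) :=
  .single ⟨h, _, cs.isReflection_simple i, rfl⟩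

lemma mul_simple_bruhatLE {w : W} {i : B} (h : ℓ (w * cs.simple i) < ℓ w) :
    BruhatLE cs (w * cs.simple i) w :=
  .single ⟨h, _, cs.isReflection_simple i, by simp [mul_assoc]⟩

/-- Exchange in the word `ω ++ [i]` for `w`, where `ω` is reduced for `w * s_i`. -/
lemma mul_eq_mul_simple_or_length_lt {w t : W} (i : B) (ht : cs.IsReflection t)
    (hwt : ℓ (w * t) < ℓ w) :
    w * t = w * cs.simple i ∨ ℓ (w * t * cs.simple i) < ℓ (w * cs.simple i) := by
  obtain ⟨ω, hω, hωw⟩ := cs.exists_isReduced (w * cs.simple i)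
  have hw : π (ω.concat i) = w := by
    rw [wordProd_concat, ← hωw, mul_assoc, simple_mul_simple_self, mul_one]
  obtain ⟨j, hj, hjt⟩ := cs.exists_wordProd_eraseIdx_eq_mul ht (ω := ω.concat i) (by rwa [hw])
  rw [hw] at hjt
  rw [length_concat] at hj
  rcases Nat.lt_succ_iff_lt_or_eq.mp hj with hj | rfl
  · right
    rw [concat_eq_append, eraseIdx_append_of_lt_length hj, ← concat_eq_append,
      wordProd_concat] at hjt
    rw [← hjt, mul_assoc, simple_mul_simple_self, mul_one, hωw, hω.eq]
    calc ℓ (π (ω.eraseIdx j)) ≤ (ω.eraseIdx j).length := cs.length_wordProd_le _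
      _ < ω.length := by rw [length_eraseIdx_of_lt hj]; omega
  · left
    rw [concat_eq_append, eraseIdx_append_of_length_le le_rfl] at hjt
    simpa [hωw] using hjt.symm

lemma eq_mul_simple_or_bruhatStep_mul_simple {u w : W} (h : BruhatStep cs u w) (i : B) :
    u = w * cs.simple i ∨ BruhatStep cs (u * cs.simple i) (w * cs.simple i) := by
  obtain ⟨hlt, t, ht, rfl⟩ := h
  replace ht : cs.IsReflection t := ht
  have hut : u * t * t = u := by rw [mul_assoc, ht.mul_self, mul_one]
  rcases cs.mul_eq_mul_simple_or_length_lt i ht (w := u * t) (by rwa [hut]) with h | h <;>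
    rw [hut] at h
  · exact .inl h
  · have hconj := ht.conj (cs.simple i)
    rw [inv_simple] at hconj
    exact .inr ⟨h, _, hconj, by simp [mul_assoc]⟩

/-- `downMul i w = w ◁ s_i = min (w, w * s_i)` and `upMul i w = w ⋆ s_i = max (w, w * s_i)`
(Demazure product) in the Bruhat order. -/
noncomputable def downMul (i : B) (w : W) : W :=
  if ℓ (w * cs.simple i) < ℓ w then w * cs.simple i else w

noncomputable def upMul (i : B) (w : W) : W :=
  if ℓ w < ℓ (w * cs.simple i) then w * cs.simple i else w

lemma downMul_eq_or (i : B) (w : W) : cs.downMul i w = w ∨ cs.downMul i w = w * cs.simple i := by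
  unfold downMul; split_ifs <;> simp

lemma upMul_eq_or (i : B) (w : W) : cs.upMul i w = w ∨ cs.upMul i w = w * cs.simple i := by
  unfold upMul; split_ifs <;> simp

lemma downMul_bruhatLE (i : B) (w : W) : BruhatLE cs (cs.downMul i w) w := by
  unfold downMul; split_ifs with h
  · exact cs.mul_simple_bruhatLE h
  · exact .refl

lemma downMul_bruhatLE_mul_simple (i : B) (w : W) :
    BruhatLE cs (cs.downMul i w) (w * cs.simple i) := by
  unfold downMul; split_ifs with h
  · exact .refl
  · exact cs.bruhatLE_mul_simple (by have := cs.length_mul_simple_ne w i; omega)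

lemma bruhatLE_upMul (i : B) (w : W) : BruhatLE cs w (cs.upMul i w) := by
  unfold upMul; split_ifs with h
  · exact cs.bruhatLE_mul_simple h
  · exact .refl

lemma mul_simple_bruhatLE_upMul (i : B) (w : W) :
    BruhatLE cs (w * cs.simple i) (cs.upMul i w) := by
  unfold upMul; split_ifs with h
  · exact .refl
  · exact cs.mul_simple_bruhatLE (by have := cs.length_mul_simple_ne w i; omega)

lemma downMul_mono (i : B) {u w : W} (h : BruhatLE cs u w) :
    BruhatLE cs (cs.downMul i u) (cs.downMul i w) := by
  refine Relation.ReflTransGen.lift' (cs.downMul i) (fun u w hstep => ?_) u w h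
  change BruhatLE cs (cs.downMul i u) (cs.downMul i w)
  have hu_le_ws : BruhatLE cs (cs.downMul i u) (w * cs.simple i) := by
    rcases cs.eq_mul_simple_or_bruhatStep_mul_simple hstep i with rfl | hstep'
    · exact cs.downMul_bruhatLE i _
    · exact (cs.downMul_bruhatLE_mul_simple i u).tail hstep'
  rcases cs.downMul_eq_or i w with hw | hw <;> rw [hw]
  · exact (cs.downMul_bruhatLE i u).tail hstep
  · exact hu_le_ws

lemma upMul_mono (i : B) {u w : W} (h : BruhatLE cs u w) :
    BruhatLE cs (cs.upMul i u) (cs.upMul i w) := by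
  refine Relation.ReflTransGen.lift' (cs.upMul i) (fun u w hstep => ?_) u w h
  change BruhatLE cs (cs.upMul i u) (cs.upMul i w)
  have hus_le : BruhatLE cs (u * cs.simple i) (cs.upMul i w) := by
    rcases cs.eq_mul_simple_or_bruhatStep_mul_simple hstep i with rfl | hstep'
    · simpa [mul_assoc] using cs.bruhatLE_upMul i w
    · exact Relation.ReflTransGen.head hstep' (cs.mul_simple_bruhatLE_upMul i w)
  rcases cs.upMul_eq_or i u with hu | hu <;> rw [hu]
  · exact Relation.ReflTransGen.head hstep (cs.bruhatLE_upMul i w)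
  · exact hus_le

/-- If `y * s_i < y` and `x * v₀` is least in `x * [≤ y * s_i]`, then `downMul i (x * v₀)` is
least in `x * [≤ y]`. -/
theorem exists_bruhatLE_forall_mul_bruhatLE_mul (x y : W) :
    ∃ v, BruhatLE cs v y ∧ ∀ v', BruhatLE cs v' y → BruhatLE cs (x * v) (x * v') := by
  induction hn : ℓ y generalizing y with
  | zero =>
    refine ⟨1, cs.length_eq_zero_iff.mp hn ▸ .refl, fun v' hv' => ?_⟩
    have := cs.length_le_of_bruhatLE hv'
    rw [cs.length_eq_zero_iff.mp (by omega : ℓ v' = 0)]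
    exact .refl
  | succ n ih =>
    obtain ⟨i, hi⟩ := cs.exists_rightDescent_of_ne_one (w := y) (by rintro rfl; simp at hn)
    obtain ⟨v₀, hv₀, hmin⟩ := ih (y * cs.simple i) (by rw [isRightDescent_iff] at hi; omega)
    have hy_up : cs.upMul i (y * cs.simple i) = y := by
      simp [upMul, mul_assoc, show ℓ (y * cs.simple i) < ℓ y from hi]
    have hy_down : cs.downMul i y = y * cs.simple i := if_pos hi
    obtain ⟨v, hv, hxv⟩ : ∃ v, BruhatLE cs v y ∧ cs.downMul i (x * v₀) = x * v := by
      rcases cs.downMul_eq_or i (x * v₀) with h | h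
      · exact ⟨v₀, hv₀.trans (cs.mul_simple_bruhatLE hi), h⟩
      · refine ⟨v₀ * cs.simple i, ?_, by rw [h, mul_assoc]⟩
        exact (cs.mul_simple_bruhatLE_upMul i v₀).trans (hy_up ▸ cs.upMul_mono i hv₀)
    refine ⟨v, hv, fun v' hv' => hxv ▸ ?_⟩
    have hdown := hy_down ▸ cs.downMul_mono i hv'
    rcases cs.downMul_eq_or i v' with h | h <;> rw [h] at hdown
    · exact (cs.downMul_bruhatLE i _).trans (hmin v' hdown)
    · have := cs.downMul_bruhatLE_mul_simple i (x * (v' * cs.simple i))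
      rw [mul_assoc, mul_assoc, simple_mul_simple_self, mul_one] at this
      exact (cs.downMul_mono i (hmin _ hdown)).trans this

end CoxeterSystem

/-- The set `{x*v : v ≤ y}` has a unique minimal element in Bruhat order
(the downwards Demazure product `x ◁ y`). -/
theorem downwards_demazure_existsUnique {M : CoxeterMatrix B} (cs : CoxeterSystem M W)
    (x y : W) :
    ∃! m : W, (∃ v : W, BruhatLE cs v y ∧ m = x * v) ∧
      ∀ z : W, (∃ v : W, BruhatLE cs v y ∧ z = x * v) → BruhatLE cs m z := by
  obtain ⟨v, hv, hmin⟩ := cs.exists_bruhatLE_forall_mul_bruhatLE_mul x y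
  refine ⟨x * v, ⟨⟨v, hv, rfl⟩, ?_⟩, ?_⟩
  · rintro _ ⟨v', hv', rfl⟩
    exact hmin v' hv'
  · rintro m ⟨⟨v', hv', rfl⟩, hm⟩
    exact cs.eq_of_bruhatLE_of_bruhatLE (hm _ ⟨v, hv, rfl⟩) (hmin v' hv')
end

section
/- In a Coxeter group, if x' ≤ x in Bruhat order, then x' * y ≤ x * y and x' ◁ y ≤ x ◁ y, where * is the Demazure product and ◁ is the downwards Demazure product. -/
variable {B W : Type*} [Group W]

/-!
The statement for `*` is transitivity of `≤`. For `◁` it suffices to find, for every `y`, some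
`v ≤ y` with `x' v ≤ x y`; this goes by induction along a reduced word of `y`, each new letter
being handled by the lifting property (Deodhar's property Z) of the Bruhat order.

The lifting property is proved by induction on length. Its one delicate case needs the strong
exchange condition, which comes from Tits' cocycle `η(w, t) ∈ ZMod 2`: `W` acts on `W × ZMod 2`
with `s` acting by `(t, ε) ↦ (s t s, ε + [t = s])`, and `w` sends `(t, ε)` to
`(w t w⁻¹, ε + η(w, t))`, where `η(w, t) = 1` exactly when `t` is a right inversion of `w`.
-/

namespace CoxeterSystem

open scoped Classical

variable {M : CoxeterMatrix B} (cs : CoxeterSystem M W)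

local prefix:100 "s" => cs.simple
local prefix:100 "π" => cs.wordProd
local prefix:100 "ℓ" => cs.length
local prefix:100 "ris" => cs.rightInvSeq

theorem simple_mul_mul_simple_eq_iff (i : B) (t u : W) :
    s i * t * s i = u ↔ t = s i * u * s i := by
  constructor <;> rintro rfl <;> simp [mul_assoc, simple_mul_simple_cancel_left]

/-- Tits' model of the reflection representation, with reflections `t` as the roots and `ε` as
their sign; letting it act on all of `W × ZMod 2` spares us the subtype of reflections. -/
noncomputable def titsSimple (i : B) : Equiv.Perm (W × ZMod 2) :=
  Function.Involutive.toPerm (fun p ↦ (s i * p.1 * s i, p.2 + if p.1 = s i then 1 else 0)) (by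
    rintro ⟨t, ε⟩
    have h : s i * t * s i = s i ↔ t = s i := by
      rw [simple_mul_mul_simple_eq_iff, simple_mul_simple_self, one_mul]
    change (s i * (s i * t * s i) * s i, ε + (if t = s i then 1 else 0) +
      if s i * t * s i = s i then 1 else 0) = (t, ε)
    rw [h, add_assoc, CharTwo.add_self_eq_zero, add_zero]
    simp [mul_assoc, simple_mul_simple_cancel_left, simple_mul_simple_self])

@[simp]
theorem titsSimple_apply (i : B) (t : W) (ε : ZMod 2) :
    cs.titsSimple i (t, ε) = (s i * t * s i, ε + if t = s i then 1 else 0) :=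
  rfl

theorem titsSimple_mul_pow_apply (i j : B) (k : ℕ) (t : W) (ε : ZMod 2) :
    ((cs.titsSimple i * cs.titsSimple j) ^ k) (t, ε) =
      ((s i * s j) ^ k * t * ((s i * s j) ^ k)⁻¹,
        ε + ∑ r ∈ Finset.range (2 * k), if t = s j * (s i * s j) ^ r then 1 else 0) := by
  have hstep (t : W) (ε : ZMod 2) : (cs.titsSimple i * cs.titsSimple j) (t, ε) =
      (s i * s j * t * (s i * s j)⁻¹, ε + ((if t = s j * (s i * s j) ^ 0 then 1 else 0) +
        if t = s j * (s i * s j) ^ 1 then 1 else 0)) := by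
    rw [Equiv.Perm.mul_apply, titsSimple_apply, titsSimple_apply, simple_mul_mul_simple_eq_iff]
    simp only [pow_zero, pow_one, mul_one, mul_assoc, add_assoc, mul_inv_rev, inv_simple]
  have hq : (s i * s j)⁻¹ * s j = s j * (s i * s j) := by simp [inv_simple, mul_assoc]
  generalize s i * s j = q at hq hstep ⊢
  induction k generalizing t ε with
  | zero => simp
  | succ k ih =>
    have hconj (r : ℕ) : q * t * q⁻¹ = s j * q ^ r ↔ t = s j * q ^ (r + 2) := by
      have : s j * q ^ (r + 2) = q⁻¹ * (s j * q ^ r) * q := by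
        rw [← mul_assoc, hq, mul_assoc, mul_assoc, ← pow_succ, ← pow_succ']
      rw [this]
      constructor <;> intro h <;> [rw [← h]; rw [h]] <;> group
    rw [pow_succ, Equiv.Perm.mul_apply, hstep, ih]
    simp only [hconj, Prod.mk.injEq]
    constructor
    · group
    · rw [show 2 * (k + 1) = 2 * k + 1 + 1 by ring, Finset.sum_range_succ',
        Finset.sum_range_succ']
      abel

theorem isLiftable_titsSimple : M.IsLiftable cs.titsSimple := by
  intro i j
  ext1 ⟨t, ε⟩
  have hq : (s i * s j) ^ M i j = 1 := cs.simple_mul_simple_pow i j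
  rw [titsSimple_mul_pow_apply, two_mul, Finset.sum_range_add]
  simp [pow_add, hq, CharTwo.add_self_eq_zero]

noncomputable def titsRep : W →* Equiv.Perm (W × ZMod 2) :=
  cs.lift ⟨cs.titsSimple, cs.isLiftable_titsSimple⟩

noncomputable def inversionCocycle (w t : W) : ZMod 2 := (cs.titsRep w (t, 0)).2

theorem titsRep_simple (i : B) : cs.titsRep (s i) = cs.titsSimple i :=
  cs.lift_apply_simple cs.isLiftable_titsSimple i

theorem titsRep_apply (w t : W) (ε : ZMod 2) :
    cs.titsRep w (t, ε) = (w * t * w⁻¹, ε + cs.inversionCocycle w t) := by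
  induction w using cs.simple_induction_left generalizing t ε with
  | one => simp [inversionCocycle]
  | mul_simple_left w i ih =>
    have h : cs.inversionCocycle (s i * w) t =
        cs.inversionCocycle w t + if w * t * w⁻¹ = s i then 1 else 0 := by
      rw [inversionCocycle, map_mul, Equiv.Perm.mul_apply, ih, titsRep_simple, titsSimple_apply,
        zero_add]
    rw [map_mul, Equiv.Perm.mul_apply, ih, titsRep_simple, titsSimple_apply, h, add_assoc,
      mul_inv_rev, inv_simple]
    simp only [mul_assoc]

theorem inversionCocycle_mul (u v t : W) :
    cs.inversionCocycle (u * v) t =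
      cs.inversionCocycle v t + cs.inversionCocycle u (v * t * v⁻¹) := by
  rw [inversionCocycle, map_mul, Equiv.Perm.mul_apply, titsRep_apply, titsRep_apply, zero_add]

@[simp]
theorem inversionCocycle_one (t : W) : cs.inversionCocycle 1 t = 0 := by
  simp [inversionCocycle]

theorem inversionCocycle_simple (i : B) (t : W) :
    cs.inversionCocycle (s i) t = if t = s i then 1 else 0 := by
  simp [inversionCocycle, titsRep_simple]

theorem inversionCocycle_inv (w t : W) :
    cs.inversionCocycle w⁻¹ (w * t * w⁻¹) = cs.inversionCocycle w t := by
  have h := cs.inversionCocycle_mul w⁻¹ w t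
  rw [inv_mul_cancel, inversionCocycle_one, eq_comm, CharTwo.add_eq_zero] at h
  exact h.symm

theorem inversionCocycle_self {t : W} (ht : cs.IsReflection t) :
    cs.inversionCocycle t t = 1 := by
  obtain ⟨g, i, rfl⟩ := ht
  have hconj : g⁻¹ * (g * s i * g⁻¹) * g = s i := by group
  rw [inversionCocycle_mul, inversionCocycle_inv, inv_inv, hconj, inversionCocycle_mul,
    inversionCocycle_simple, if_pos rfl, simple_mul_simple_self, one_mul, inv_simple,
    add_left_comm, CharTwo.add_self_eq_zero, add_zero]

theorem mem_rightInvSeq_of_inversionCocycle_eq_one (ω : List B) {t : W}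
    (h : cs.inversionCocycle (π ω) t = 1) : t ∈ ris ω := by
  induction ω with
  | nil => simp at h
  | cons i ω ih =>
    rw [wordProd_cons, inversionCocycle_mul, inversionCocycle_simple] at h
    rw [rightInvSeq, List.mem_cons]
    by_cases hi : π ω * t * (π ω)⁻¹ = s i
    · left
      rw [← hi]
      group
    · rw [if_neg hi, add_zero] at h
      exact .inr (ih h)

theorem isRightInversion_of_inversionCocycle_eq_one {w t : W}
    (h : cs.inversionCocycle w t = 1) : cs.IsRightInversion w t := by
  obtain ⟨ω, hω, rfl⟩ := cs.exists_isReduced w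
  exact cs.isRightInversion_of_mem_rightInvSeq hω
    (cs.mem_rightInvSeq_of_inversionCocycle_eq_one ω h)

theorem inversionCocycle_eq_one_of_isRightInversion {w t : W} (h : cs.IsRightInversion w t) :
    cs.inversionCocycle w t = 1 := by
  obtain ⟨ht, hlt⟩ := h
  have hv : cs.inversionCocycle (w * t) t = 0 :=
    (by decide : ∀ a : ZMod 2, a ≠ 1 → a = 0) _ fun h1 ↦ by
      have := (cs.isRightInversion_of_inversionCocycle_eq_one h1).2
      rw [mul_assoc, ht.mul_self, mul_one] at this
      omega
  calc cs.inversionCocycle w t = cs.inversionCocycle (w * t * t) t := by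
        rw [mul_assoc, ht.mul_self, mul_one]
    _ = 1 := by rw [inversionCocycle_mul, mul_inv_cancel_right, cs.inversionCocycle_self ht, hv,
        add_zero]

/-- The strong exchange condition. -/
theorem IsRightInversion.mem_rightInvSeq {ω : List B} {t : W}
    (h : cs.IsRightInversion (π ω) t) : t ∈ ris ω :=
  cs.mem_rightInvSeq_of_inversionCocycle_eq_one ω
    (cs.inversionCocycle_eq_one_of_isRightInversion h)

theorem simple_induction_right_of_not_isRightDescent {p : W → Prop} (w : W) (one : p 1)
    (mul_simple_right : ∀ (w : W) (i : B), ¬cs.IsRightDescent w i → p w → p (w * s i)) :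
    p w := by
  induction hn : ℓ w using Nat.strong_induction_on generalizing w with
  | _ n ih =>
  by_cases hw : w = 1
  · exact hw ▸ one
  obtain ⟨i, hi⟩ := cs.exists_rightDescent_of_ne_one hw
  rw [← cs.simple_mul_simple_cancel_right (w := w) i]
  exact mul_simple_right _ i (cs.isRightDescent_iff_not_isRightDescent_mul.mp hi)
    (ih _ (hn ▸ hi) _ rfl)

end CoxeterSystem

section BruhatOrder

open CoxeterSystem

variable {M : CoxeterMatrix B} {cs : CoxeterSystem M W}

local prefix:100 "s" => cs.simple
local prefix:100 "ℓ" => cs.length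

theorem BruhatLE.refl (w : W) : BruhatLE cs w w := Relation.ReflTransGen.refl

theorem BruhatLE.trans {u v w : W} (h₁ : BruhatLE cs u v) (h₂ : BruhatLE cs v w) :
    BruhatLE cs u w :=
  Relation.ReflTransGen.trans h₁ h₂

theorem bruhatLE_mul_of_length_lt {w t : W} (ht : cs.IsReflection t) (h : ℓ w < ℓ (w * t)) :
    BruhatLE cs w (w * t) :=
  .single ⟨h, t, ht, rfl⟩

theorem bruhatLE_mul_simple {w : W} {i : B} (h : ¬cs.IsRightDescent w i) :
    BruhatLE cs w (w * s i) :=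
  bruhatLE_mul_of_length_lt (cs.isReflection_simple i) <| by
    rw [cs.not_isRightDescent_iff] at h
    omega

theorem bruhatLE_mul_simple_of_isRightDescent {w : W} {i : B} (h : cs.IsRightDescent w i) :
    BruhatLE cs (w * s i) w := by
  have := bruhatLE_mul_simple (cs.isRightDescent_iff_not_isRightDescent_mul.mp h)
  rwa [simple_mul_simple_cancel_right] at this

theorem bruhatLE_mul_simple_mul_mul_simple_of_length_lt {v t : W} (ht : cs.IsReflection t)
    (i : B) (h : ℓ (v * s i) < ℓ (v * t * s i)) : BruhatLE cs (v * s i) (v * t * s i) := by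
  have hconj : cs.IsReflection (s i * t * s i) := by simpa [inv_simple] using ht.conj (s i)
  have heq : v * t * s i = v * s i * (s i * t * s i) := by
    simp [mul_assoc, simple_mul_simple_cancel_left]
  rw [heq] at h ⊢
  exact bruhatLE_mul_of_length_lt hconj h

theorem bruhatLE_mul_simple_mul_mul_simple {v t : W} (ht : cs.IsReflection t)
    (hlt : ℓ v < ℓ (v * t)) {i : B}
    (hi : cs.IsRightDescent v i ↔ cs.IsRightDescent (v * t) i) :
    BruhatLE cs (v * s i) (v * t * s i) := by
  refine bruhatLE_mul_simple_mul_mul_simple_of_length_lt ht i ?_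
  by_cases hv : cs.IsRightDescent v i
  · have hw := hi.mp hv
    rw [cs.isRightDescent_iff] at hv hw
    omega
  · have hw := mt hi.mpr hv
    rw [cs.not_isRightDescent_iff] at hv hw
    omega

theorem bruhatLE_mul_mul_simple {v t : W} (ht : cs.IsReflection t) (hlt : ℓ v < ℓ (v * t))
    {i : B} (hv : ¬cs.IsRightDescent v i) (hw : cs.IsRightDescent (v * t) i) :
    BruhatLE cs v (v * t * s i) := by
  by_cases hlen : ℓ (v * s i) < ℓ (v * t * s i)
  · exact (bruhatLE_mul_simple hv).trans
      (bruhatLE_mul_simple_mul_mul_simple_of_length_lt ht i hlen)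
  -- Now `ℓ (v * t) = ℓ v + 1`, and strong exchange in the reduced word `α ++ [i]` of `v * t`
  -- forces `t = s i`.
  obtain ⟨α, hα, hαw⟩ := cs.exists_isReduced (v * t * s i)
  have hw_eq : cs.wordProd (α.concat i) = v * t := by
    rw [List.concat_eq_append, wordProd_append, wordProd_singleton, ← hαw,
      simple_mul_simple_cancel_right]
  have hmem : t ∈ cs.rightInvSeq (α.concat i) :=
    IsRightInversion.mem_rightInvSeq cs ⟨ht, by rwa [hw_eq, mul_assoc, ht.mul_self, mul_one]⟩
  rw [rightInvSeq_concat, List.concat_eq_append, List.mem_append, List.mem_singleton,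
    List.mem_map] at hmem
  obtain ⟨r, hr, rfl⟩ | rfl := hmem
  · have hvs : v * s i = cs.wordProd α * r := by
      rw [← hαw, MulAut.conj_apply, inv_simple]
      simp only [mul_assoc, simple_mul_simple_self, mul_one,
        (cs.isReflection_of_mem_rightInvSeq α hr).mul_self]
    have hlt' := (cs.isRightInversion_of_mem_rightInvSeq hα hr).2
    rw [← hvs, ← hαw] at hlt'
    exact absurd hlt' hlen
  · rw [simple_mul_simple_cancel_right]
    exact .refl v

theorem bruhatLE_lifting (w u : W) (hu : BruhatLE cs u w) (i : B) :
    ((cs.IsRightDescent u i ↔ cs.IsRightDescent w i) → BruhatLE cs (u * s i) (w * s i)) ∧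
      (¬cs.IsRightDescent u i → cs.IsRightDescent w i → BruhatLE cs u (w * s i)) := by
  induction hn : ℓ w using Nat.strong_induction_on generalizing w u with
  | _ n ih =>
  obtain rfl | ⟨v, huv, hlt, t, ht, rfl⟩ := Relation.ReflTransGen.cases_tail hu
  · exact ⟨fun _ ↦ .refl _, fun hu' hw ↦ absurd hw hu'⟩
  have ih_v := ih (ℓ v) (hn ▸ hlt) v u huv rfl
  by_cases hvw : cs.IsRightDescent v i ↔ cs.IsRightDescent (v * t) i
  · have hstep := bruhatLE_mul_simple_mul_mul_simple ht hlt hvw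
    exact ⟨fun h ↦ (ih_v.1 (h.trans hvw.symm)).trans hstep,
      fun hu' hw ↦ (ih_v.2 hu' (hvw.mpr hw)).trans hstep⟩
  by_cases hw : cs.IsRightDescent (v * t) i
  · have hv_le :=
      huv.trans (bruhatLE_mul_mul_simple ht hlt (fun hv ↦ hvw (iff_of_true hv hw)) hw)
    exact ⟨fun h ↦ (bruhatLE_mul_simple_of_isRightDescent (h.mpr hw)).trans hv_le,
      fun _ _ ↦ hv_le⟩
  refine ⟨fun h ↦ ?_, fun _ hw' ↦ absurd hw' hw⟩
  have hv : cs.IsRightDescent v i := by tauto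
  have hu' : ¬cs.IsRightDescent u i := by tauto
  have hvs : ¬cs.IsRightDescent (v * s i) i := cs.isRightDescent_iff_not_isRightDescent_mul.mp hv
  have hu_vs := ih_v.2 hu' hv
  have := (ih (ℓ (v * s i)) (hn ▸ hv.trans hlt) (v * s i) u hu_vs rfl).1
    (iff_of_false hu' hvs)
  rw [simple_mul_simple_cancel_right] at this
  exact this.trans ((bruhatLE_mul_of_length_lt ht hlt).trans (bruhatLE_mul_simple hw))

theorem BruhatLE.mul_simple_of_isRightDescent_iff {u w : W} (h : BruhatLE cs u w) {i : B}
    (hi : cs.IsRightDescent u i ↔ cs.IsRightDescent w i) : BruhatLE cs (u * s i) (w * s i) :=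
  (bruhatLE_lifting w u h i).1 hi

theorem BruhatLE.le_mul_simple {u w : W} (h : BruhatLE cs u w) {i : B}
    (hu : ¬cs.IsRightDescent u i) (hw : cs.IsRightDescent w i) : BruhatLE cs u (w * s i) :=
  (bruhatLE_lifting w u h i).2 hu hw

theorem BruhatLE.mul_simple_of_not_isRightDescent {u w : W} (h : BruhatLE cs u w) {i : B}
    (hw : ¬cs.IsRightDescent w i) : BruhatLE cs (u * s i) (w * s i) := by
  by_cases hu : cs.IsRightDescent u i
  · exact (bruhatLE_mul_simple_of_isRightDescent hu).trans (h.trans (bruhatLE_mul_simple hw))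
  · exact h.mul_simple_of_isRightDescent_iff (iff_of_false hu hw)

theorem BruhatLE.exists_le_mul_le_mul {x' x : W} (h : BruhatLE cs x' x) (y : W) :
    ∃ v, BruhatLE cs v y ∧ BruhatLE cs (x' * v) (x * y) := by
  induction y using cs.simple_induction_right_of_not_isRightDescent with
  | one => exact ⟨1, .refl 1, by simpa using h⟩
  | mul_simple_right y i hy ih =>
  obtain ⟨v, hvy, hxv⟩ := ih
  have hv_le : BruhatLE cs v (y * s i) := hvy.trans (bruhatLE_mul_simple hy)
  rw [← mul_assoc]
  by_cases hx : cs.IsRightDescent (x * y) i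
  · by_cases hx' : cs.IsRightDescent (x' * v) i
    · refine ⟨v * s i, hvy.mul_simple_of_not_isRightDescent hy, ?_⟩
      rw [← mul_assoc]
      exact hxv.mul_simple_of_isRightDescent_iff (iff_of_true hx' hx)
    · exact ⟨v, hv_le, hxv.le_mul_simple hx' hx⟩
  · exact ⟨v, hv_le, hxv.trans (bruhatLE_mul_simple hx)⟩

end BruhatOrder

/-- Monotonicity of the Demazure product and downwards Demazure product in the first
argument: if `x' ≤ x`, then `x' * y ≤ x * y` and `x' ◁ y ≤ x ◁ y`. Here the Demazure
products are characterized by their defining extremal properties. -/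
theorem demazure_mono {M : CoxeterMatrix B} (cs : CoxeterSystem M W)
    (x x' y m m' d d' : W)
    (hxx : BruhatLE cs x' x)
    (hm : (∃ u v : W, BruhatLE cs u x ∧ BruhatLE cs v y ∧ m = u * v) ∧
      ∀ z : W, (∃ u v : W, BruhatLE cs u x ∧ BruhatLE cs v y ∧ z = u * v) → BruhatLE cs z m)
    (hm' : (∃ u v : W, BruhatLE cs u x' ∧ BruhatLE cs v y ∧ m' = u * v) ∧
      ∀ z : W, (∃ u v : W, BruhatLE cs u x' ∧ BruhatLE cs v y ∧ z = u * v) → BruhatLE cs z m')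
    (hd : (∃ v : W, BruhatLE cs v y ∧ d = x * v) ∧
      ∀ z : W, (∃ v : W, BruhatLE cs v y ∧ z = x * v) → BruhatLE cs d z)
    (hd' : (∃ v : W, BruhatLE cs v y ∧ d' = x' * v) ∧
      ∀ z : W, (∃ v : W, BruhatLE cs v y ∧ z = x' * v) → BruhatLE cs d' z) :
    BruhatLE cs m' m ∧ BruhatLE cs d' d := by
  obtain ⟨⟨u, v, hux', hvy, rfl⟩, -⟩ := hm'
  obtain ⟨⟨v₀, hv₀y, rfl⟩, -⟩ := hd
  obtain ⟨v₁, hv₁v₀, hle⟩ := hxx.exists_le_mul_le_mul v₀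
  exact ⟨hm.2 _ ⟨u, v, hux'.trans hxx, hvy, rfl⟩,
    (hd'.2 _ ⟨v₁, hv₁v₀.trans hv₀y, rfl⟩).trans hle⟩
end

section
/- Let W be a Coxeter group, w = s_{i₁}⋯s_{i_n} a reduced expression, and v ≤ w in Bruhat order. Then there exists a unique positive subexpression for v in this reduced word: a sequence v_(0) = id, v_(1), …, v_(n) = v such that for each j, either v_(j) = v_(j−1) or v_(j) = v_(j−1)s_{i_j}, and in every step v_(j−1) < v_(j−1)s_{i_j}. Moreover it is given inductively from the right by v_(j−1) = v_(j)s_{i_j} if v_(j)s_{i_j} < v_(j), and v_(j−1) = v_(j) otherwise. -/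
variable {B W : Type*} [Group W]

/-- `vs` is a positive subexpression for `v` inside the word `ω`. -/
def IsPositiveSubexpr {M : CoxeterMatrix B} (cs : CoxeterSystem M W)
    (ω : List B) (v : W) (vs : Fin (ω.length + 1) → W) : Prop :=
  vs 0 = 1 ∧ vs (Fin.last ω.length) = v ∧
    ∀ j : Fin ω.length,
      (vs j.succ = vs j.castSucc ∨ vs j.succ = vs j.castSucc * cs.simple (ω.get j)) ∧
      cs.length (vs j.castSucc) < cs.length (vs j.castSucc * cs.simple (ω.get j))


/-!
Every `v ≤ π ω` is the product of a subword of `ω`: walking down a Bruhat chain, the strong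
exchange condition turns each multiplication by a length-decreasing reflection into the deletion
of a letter. If `v` is a subword product of `ω ++ [i]`, then `v` or `v s_i` is one of `ω`, hence
so is the shorter of the two. So the sequence built greedily from the right,
`v_(j-1) = min(v_(j), v_(j) s_{i_j})`, ends at a subword product of the empty word, which is `1`,
and it is positive by construction. Conversely, positivity of a step forces `v_(j-1)` to be the
shorter of `v_(j)` and `v_(j) s_{i_j}`, which gives the recursion and uniqueness.

Strong exchange comes from the action of `W` on `W × ZMod 2` in which `s_i` acts by
`(t, e) ↦ (s_i t s_i, e + [t = s_i])`. The parity `η(w, t)` (`inversionParity`) that `w` adds to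
`(t, e)` counts, mod 2, the occurrences of `t` in the right inversion sequence of any word for
`w`. It is `1` exactly when `ℓ(w t) < ℓ(w)`: reduced words give one direction,
`η(w t, t) = η(w, t) + 1` the other. So such a `t` occurs in the inversion sequence of every
word for `w`, and deleting the corresponding letter gives a word for `w t`.
-/

namespace CoxeterSystem

open List

open scoped Classical

variable {M : CoxeterMatrix B} (cs : CoxeterSystem M W)

local prefix:100 "s" => cs.simple
local prefix:100 "π" => cs.wordProd
local prefix:100 "ℓ" => cs.length
local prefix:100 "ris" => cs.rightInvSeq

theorem alternatingWord_two_mul_succ (i j : B) (m : ℕ) :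
    alternatingWord i j (2 * (m + 1)) = i :: j :: alternatingWord i j (2 * m) := by
  rw [show 2 * (m + 1) = 2 * m + 1 + 1 by ring, alternatingWord_succ', alternatingWord_succ']
  simp

theorem reverse_alternatingWord_two_mul (i j : B) (m : ℕ) :
    (alternatingWord i j (2 * m)).reverse = alternatingWord j i (2 * m) := by
  induction m with
  | zero => rfl
  | succ m ih =>
    rw [alternatingWord_two_mul_succ, show 2 * (m + 1) = 2 * m + 1 + 1 by ring,
      alternatingWord_succ, alternatingWord_succ]
    simp [ih]

/- The inversion sequence of the braid relator consists of two copies of the same list, since its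
`k`-th entry is `π (alternatingWord i j (2 * k + 1))` and `(s i * s j) ^ M i j = 1`. -/
theorem even_count_rightInvSeq_alternatingWord (i j : B) (t : W) :
    Even ((ris (alternatingWord i j (2 * M i j))).count t) := by
  rw [← reverse_alternatingWord_two_mul j i, rightInvSeq_reverse, count_reverse]
  set L := cs.leftInvSeq (alternatingWord j i (2 * M i j))
  have hL : L.drop (M i j) = L.take (M i j) := by
    have hlen : L.length = 2 * M i j := by simp [L]
    refine ext_getElem (by simp only [length_drop, length_take, hlen]; omega) fun k _ hk => ?_
    replace hk : k < M i j := by simp only [length_take, hlen] at hk; omega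
    rw [getElem_drop, getElem_take, getElem_leftInvSeq_alternatingWord _ _ _ _ _ (by omega),
      getElem_leftInvSeq_alternatingWord _ _ _ _ _ (by omega), prod_alternatingWord_eq_mul_pow,
      prod_alternatingWord_eq_mul_pow, show (2 * (M i j + k) + 1) / 2 = k + M i j by omega,
      show (2 * k + 1) / 2 = k by omega, pow_add, simple_mul_simple_pow, mul_one]
    simp
  rw [← take_append_drop (M i j) L, count_append, hL]
  exact ⟨_, rfl⟩

noncomputable def simplePerm (i : B) : Equiv.Perm (W × ZMod 2) :=
  Function.Involutive.toPerm (fun x => (s i * x.1 * s i, x.2 + if x.1 = s i then 1 else 0))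
    fun ⟨t, e⟩ => by
      have hconj : s i * t * s i = s i ↔ t = s i := by
        constructor
        · intro h
          simpa [mul_assoc] using congrArg (fun x => s i * x * s i) h
        · rintro rfl
          simp
      ext
      · simp [mul_assoc]
      · by_cases ht : t = s i <;> simp [ht, hconj, add_assoc, CharTwo.add_self_eq_zero]

theorem simplePerm_apply (i : B) (t : W) (e : ZMod 2) :
    cs.simplePerm i (t, e) = (s i * t * s i, e + if t = s i then 1 else 0) := rfl

noncomputable def wordPerm (ω : List B) : Equiv.Perm (W × ZMod 2) := (ω.map cs.simplePerm).prod

theorem wordPerm_apply (ω : List B) (t : W) (e : ZMod 2) :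
    cs.wordPerm ω (t, e) = (π ω * t * (π ω)⁻¹, e + (ris ω).count t) := by
  induction ω generalizing e with
  | nil => simp [wordPerm]
  | cons i ω ih =>
    have hconj : π ω * t * (π ω)⁻¹ = s i ↔ (π ω)⁻¹ * s i * π ω = t := by
      constructor <;> intro h <;> rw [← h] <;> group
    simp only [wordPerm, map_cons, prod_cons, Equiv.Perm.mul_apply] at ih ⊢
    rw [ih, simplePerm_apply, wordProd_cons, rightInvSeq, count_cons, hconj]
    ext
    · simp [mul_assoc]
    · simp [add_assoc]

theorem wordPerm_alternatingWord (i j : B) (m : ℕ) :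
    cs.wordPerm (alternatingWord i j (2 * m)) = (cs.simplePerm i * cs.simplePerm j) ^ m := by
  induction m with
  | zero => rfl
  | succ m ih => simp [wordPerm, alternatingWord_two_mul_succ, ← ih, pow_succ', mul_assoc]

theorem isLiftable_simplePerm : M.IsLiftable cs.simplePerm := by
  intro i j
  have hprod : π (alternatingWord i j (2 * M i j)) = 1 := by
    simp [prod_alternatingWord_eq_mul_pow, simple_mul_simple_pow]
  rw [← wordPerm_alternatingWord]
  ext ⟨t, e⟩ : 1
  obtain ⟨c, hc⟩ := cs.even_count_rightInvSeq_alternatingWord i j t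
  rw [wordPerm_apply, hprod, hc]
  simp [CharTwo.add_self_eq_zero]

noncomputable def permRep : W →* Equiv.Perm (W × ZMod 2) :=
  cs.lift ⟨cs.simplePerm, cs.isLiftable_simplePerm⟩

theorem permRep_wordProd (ω : List B) : cs.permRep (π ω) = cs.wordPerm ω := by
  induction ω with
  | nil => simp [wordPerm]
  | cons i ω ih =>
    rw [wordProd_cons, map_mul, ih, permRep, lift_apply_simple]
    simp [wordPerm]

noncomputable def inversionParity (w t : W) : ZMod 2 := (cs.permRep w (t, 0)).2

theorem inversionParity_wordProd (ω : List B) (t : W) :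
    cs.inversionParity (π ω) t = (ris ω).count t := by
  simp [inversionParity, permRep_wordProd, wordPerm_apply]

theorem permRep_apply (w t : W) (e : ZMod 2) :
    cs.permRep w (t, e) = (w * t * w⁻¹, e + cs.inversionParity w t) := by
  obtain ⟨ω, rfl⟩ := cs.wordProd_surjective w
  rw [inversionParity_wordProd, permRep_wordProd, wordPerm_apply]

theorem inversionParity_one (t : W) : cs.inversionParity 1 t = 0 := by
  simp [inversionParity]

theorem inversionParity_mul (u v t : W) :
    cs.inversionParity (u * v) t =
      cs.inversionParity v t + cs.inversionParity u (v * t * v⁻¹) := by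
  have h : cs.permRep (u * v) (t, 0) = cs.permRep u (cs.permRep v (t, 0)) := by
    rw [map_mul, Equiv.Perm.mul_apply]
  rw [permRep_apply, permRep_apply, permRep_apply] at h
  simpa using congrArg Prod.snd h

theorem mem_rightInvSeq_of_inversionParity_eq_one {ω : List B} {t : W}
    (h : cs.inversionParity (π ω) t = 1) : t ∈ ris ω := by
  rw [← count_pos_iff, Nat.pos_iff_ne_zero]
  intro h0
  simp [inversionParity_wordProd, h0] at h

theorem length_mul_lt_of_inversionParity_eq_one {w t : W} (h : cs.inversionParity w t = 1) :
    ℓ (w * t) < ℓ w := by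
  obtain ⟨ω, hω, rfl⟩ := cs.exists_isReduced w
  exact (cs.isRightInversion_of_mem_rightInvSeq hω
    (cs.mem_rightInvSeq_of_inversionParity_eq_one h)).2

namespace IsReflection

variable {cs} {t : W}

theorem inversionParity_self (ht : cs.IsReflection t) : cs.inversionParity t t = 1 := by
  obtain ⟨g, i, rfl⟩ := ht
  have hsimple : cs.inversionParity (s i) (s i) = 1 := by
    simpa using cs.inversionParity_wordProd [i] (s i)
  have hconj : g⁻¹ * (g * s i * g⁻¹) * g⁻¹⁻¹ = s i := by group
  have hcancel := cs.inversionParity_mul g g⁻¹ (g * s i * g⁻¹)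
  rw [mul_inv_cancel, inversionParity_one, hconj] at hcancel
  rw [inversionParity_mul, hconj, inversionParity_mul, inv_simple,
    simple_mul_simple_cancel_right, hsimple]
  linear_combination -hcancel

theorem inversionParity_mul_self (ht : cs.IsReflection t) (w : W) :
    cs.inversionParity (w * t) t = cs.inversionParity w t + 1 := by
  rw [inversionParity_mul, ht.mul_self, one_mul, ht.inv, ht.inversionParity_self, add_comm]

theorem inversionParity_eq_one (ht : cs.IsReflection t) {w : W} (h : ℓ (w * t) < ℓ w) :
    cs.inversionParity w t = 1 := by
  by_contra hne
  have hflip : cs.inversionParity (w * t) t = 1 := by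
    have key : ∀ x : ZMod 2, x ≠ 1 → x + 1 = 1 := by decide
    rw [ht.inversionParity_mul_self, key _ hne]
  have := cs.length_mul_lt_of_inversionParity_eq_one hflip
  rw [mul_assoc, ht.mul_self, mul_one] at this
  omega

theorem strong_exchange (ht : cs.IsReflection t) {ω : List B} (h : ℓ (π ω * t) < ℓ (π ω)) :
    ∃ k < ω.length, π (ω.eraseIdx k) = π ω * t := by
  obtain ⟨k, hk, hkt⟩ := mem_iff_getElem.mp
    (cs.mem_rightInvSeq_of_inversionParity_eq_one (ht.inversionParity_eq_one h))
  rw [length_rightInvSeq] at hk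
  refine ⟨k, hk, ?_⟩
  rw [← wordProd_mul_getD_rightInvSeq, getD_eq_getElem _ _ (by simpa using hk), hkt]

end IsReflection

def IsSubwordProd (ω : List B) (v : W) : Prop :=
  ∃ σ : List B, σ.Sublist ω ∧ π σ = v

noncomputable def rightDescend (i : B) (u : W) : W := if ℓ (u * s i) < ℓ u then u * s i else u

theorem rightDescend_mul_simple (i : B) (u : W) :
    cs.rightDescend i (u * s i) = cs.rightDescend i u := by
  unfold rightDescend
  rw [simple_mul_simple_cancel_right]
  rcases cs.length_mul_simple u i with h | h
  · rw [if_pos (by omega), if_neg (by omega)]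
  · rw [if_neg (by omega), if_pos (by omega)]

theorem rightDescend_of_length_lt {i : B} {u : W} (h : ℓ u < ℓ (u * s i)) :
    cs.rightDescend i u = u :=
  if_neg (lt_asymm h)

theorem rightDescend_spec (i : B) (u : W) :
    (u = cs.rightDescend i u ∨ u = cs.rightDescend i u * s i) ∧
      ℓ (cs.rightDescend i u) < ℓ (cs.rightDescend i u * s i) := by
  unfold rightDescend
  split_ifs with h
  · refine ⟨.inr (cs.simple_mul_simple_cancel_right i).symm, ?_⟩
    rwa [simple_mul_simple_cancel_right]
  · exact ⟨.inl rfl, by rcases cs.length_mul_simple u i with h' | h' <;> omega⟩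

noncomputable def greedySubexpr (ω : List B) (v : W) : Fin (ω.length + 1) → W :=
  fun j => (ω.drop j).foldr cs.rightDescend v

theorem greedySubexpr_castSucc (ω : List B) (v : W) (j : Fin ω.length) :
    cs.greedySubexpr ω v j.castSucc =
      cs.rightDescend (ω.get j) (cs.greedySubexpr ω v j.succ) := by
  simp only [greedySubexpr, Fin.val_castSucc, Fin.val_succ, drop_eq_getElem_cons j.isLt,
    foldr_cons]
  rfl

namespace IsSubwordProd

variable {cs} {ω : List B} {v : W}

theorem mul_reflection (hv : cs.IsSubwordProd ω v) {t : W} (ht : cs.IsReflection t)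
    (hlt : ℓ (v * t) < ℓ v) : cs.IsSubwordProd ω (v * t) := by
  obtain ⟨σ, hσ, rfl⟩ := hv
  obtain ⟨k, -, hk⟩ := ht.strong_exchange hlt
  exact ⟨σ.eraseIdx k, (eraseIdx_sublist σ k).trans hσ, hk⟩

theorem of_bruhatLE {w : W} (hvw : BruhatLE cs v w) (hw : cs.IsSubwordProd ω w) :
    cs.IsSubwordProd ω v := by
  induction hvw using Relation.ReflTransGen.head_induction_on with
  | refl => exact hw
  | head hstep _ ih =>
    obtain ⟨hlt, t, ht, rfl⟩ := hstep
    have hrefl : cs.IsReflection t := ht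
    have hback := ih.mul_reflection hrefl (by rwa [mul_assoc, hrefl.mul_self, mul_one])
    rwa [mul_assoc, hrefl.mul_self, mul_one] at hback

theorem eq_one (hv : cs.IsSubwordProd [] v) : v = 1 := by
  obtain ⟨σ, hσ, rfl⟩ := hv
  rw [sublist_nil.mp hσ, wordProd_nil]

theorem of_append_singleton {i : B} (hv : cs.IsSubwordProd (ω ++ [i]) v) :
    cs.IsSubwordProd ω v ∨ cs.IsSubwordProd ω (v * s i) := by
  obtain ⟨σ, hσ, rfl⟩ := hv
  obtain ⟨σ₁, σ₂, rfl, h₁, h₂⟩ := sublist_append_iff.mp hσ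
  rcases sublist_singleton.mp h₂ with rfl | rfl
  · exact .inl ⟨σ₁, h₁, by simp⟩
  · exact .inr ⟨σ₁, h₁, by simp [wordProd_append]⟩

theorem rightDescend (hv : cs.IsSubwordProd ω v) (i : B) :
    cs.IsSubwordProd ω (cs.rightDescend i v) := by
  unfold CoxeterSystem.rightDescend
  split_ifs with h
  · exact hv.mul_reflection (cs.isReflection_simple i) h
  · exact hv

theorem foldr_rightDescend {β : List B} (hv : cs.IsSubwordProd (ω ++ β) v) :
    cs.IsSubwordProd ω (β.foldr cs.rightDescend v) := by
  induction β generalizing ω with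
  | nil => simpa using hv
  | cons i β ih =>
    rw [foldr_cons]
    rcases (ih (ω := ω ++ [i]) (by simpa using hv)).of_append_singleton with h | h
    · exact h.rightDescend i
    · rw [← rightDescend_mul_simple]
      exact h.rightDescend i

theorem isPositiveSubexpr_greedySubexpr (hv : cs.IsSubwordProd ω v) :
    IsPositiveSubexpr cs ω v (cs.greedySubexpr ω v) := by
  refine ⟨?_, by simp [greedySubexpr], fun j => ?_⟩
  · exact eq_one (foldr_rightDescend (ω := []) hv)
  · rw [greedySubexpr_castSucc]
    exact cs.rightDescend_spec _ _

end IsSubwordProd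

end CoxeterSystem

namespace IsPositiveSubexpr

variable {M : CoxeterMatrix B} {cs : CoxeterSystem M W} {ω : List B} {v : W}

theorem eq_rightDescend {vs : Fin (ω.length + 1) → W} (h : IsPositiveSubexpr cs ω v vs)
    (j : Fin ω.length) : vs j.castSucc = cs.rightDescend (ω.get j) (vs j.succ) := by
  obtain ⟨hmove, hpos⟩ := h.2.2 j
  have hsame :
      cs.rightDescend (ω.get j) (vs j.succ) = cs.rightDescend (ω.get j) (vs j.castSucc) := by
    rcases hmove with hmove | hmove <;> rw [hmove]
    exact cs.rightDescend_mul_simple _ _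
  rw [hsame, cs.rightDescend_of_length_lt hpos]

theorem unique {vs vs' : Fin (ω.length + 1) → W} (h : IsPositiveSubexpr cs ω v vs)
    (h' : IsPositiveSubexpr cs ω v vs') : vs = vs' := by
  funext j
  induction j using Fin.reverseInduction with
  | last => rw [h.2.1, h'.2.1]
  | cast j ih => rw [h.eq_rightDescend, h'.eq_rightDescend, ih]

end IsPositiveSubexpr

theorem positive_subexpression_existsUnique_general {M : CoxeterMatrix B} (cs : CoxeterSystem M W)
    (ω : List B) (v : W)
    (hv : BruhatLE cs v (cs.wordProd ω)) :
    (∃! vs : Fin (ω.length + 1) → W, IsPositiveSubexpr cs ω v vs) ∧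
    ∀ vs : Fin (ω.length + 1) → W, IsPositiveSubexpr cs ω v vs →
      ∀ j : Fin ω.length,
        vs j.castSucc =
          if cs.length (vs j.succ * cs.simple (ω.get j)) < cs.length (vs j.succ)
          then vs j.succ * cs.simple (ω.get j) else vs j.succ := by
  have hsub : cs.IsSubwordProd ω v := .of_bruhatLE hv ⟨ω, .refl ω, rfl⟩
  have hgreedy := hsub.isPositiveSubexpr_greedySubexpr
  exact ⟨⟨_, hgreedy, fun vs h => h.unique hgreedy⟩, fun vs h j => h.eq_rightDescend j⟩

/-- Existence and uniqueness of the positive subexpression for `v ≤ w` inside a reduced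
word for `w` (Marsh–Rietsch), together with its inductive construction from the right. -/
theorem positive_subexpression_existsUnique {M : CoxeterMatrix B} (cs : CoxeterSystem M W)
    (ω : List B) (hred : cs.IsReduced ω) (v : W)
    (hv : BruhatLE cs v (cs.wordProd ω)) :
    (∃! vs : Fin (ω.length + 1) → W, IsPositiveSubexpr cs ω v vs) ∧
    ∀ vs : Fin (ω.length + 1) → W, IsPositiveSubexpr cs ω v vs →
      ∀ j : Fin ω.length,
        vs j.castSucc =
          if cs.length (vs j.succ * cs.simple (ω.get j)) < cs.length (vs j.succ)
          then vs j.succ * cs.simple (ω.get j) else vs j.succ :=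
  positive_subexpression_existsUnique_general cs ω v hv
end

section
/- Let W be a Coxeter group, w ∈ W with reduced word (i₁,…,i_n), and v ≤ w. If the unique positive subexpression (v_(0),…,v_(n)) for v inside this reduced word satisfies v_(1) = s_{i₁}, then v ≰ s_{i₁}w. -/
variable {B W : Type*} [Group W]

/-!
Positive subexpressions are greedy from the right: `v_(k-1) = v_(k) s_{i_k}` exactly when this
shortens `v_(k)`. If `v ≤ s_{i₁} w`, the subword property writes `v` as the product of a reduced
subword of `(i₂, …, i_n)`, and greedy descent along a word, started at such a product, ends at `1`;
so `v_(1) = 1`.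

The subword property rests on the strong exchange condition, proved with Humphreys' sign cocycle
`η(w, t) = ±1` (`η(w, t) = -1` iff `t` is a left inversion of `w`). It is well defined on `W`
because it is the left component of a homomorphism `W →* (W → ℤˣ) ⋊ W` built from the Coxeter
presentation.
-/

open List

abbrev conjArrow (G : Type*) [Group G] : G →* MulAut (G → ℤˣ) :=
  mulAutArrow.comp ConjAct.toConjAct.toMonoidHom

lemma conjArrow_apply {G : Type*} [Group G] (g : G) (f : G → ℤˣ) (t : G) :
    conjArrow G g f t = f (g⁻¹ * t * g) := by
  change f ((ConjAct.toConjAct g)⁻¹ • t) = _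
  rw [ConjAct.smul_def]
  simp

lemma conjArrow_mulSingle {G : Type*} [Group G] [DecidableEq G] (g x : G) (a : ℤˣ) :
    conjArrow G g (Pi.mulSingle x a) = Pi.mulSingle (g * x * g⁻¹) a := by
  ext t : 1
  simp only [conjArrow_apply, Pi.mulSingle_apply]
  congr 1
  exact propext ⟨fun h => by rw [← h]; group, fun h => by rw [h]; group⟩

lemma SemidirectProduct.left_pow {N G : Type*} [CommGroup N] [Group G] {φ : G →* MulAut N}
    (a : N ⋊[φ] G) (k : ℕ) : (a ^ k).left = ∏ r ∈ Finset.range k, φ (a.right ^ r) a.left := by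
  induction k with
  | zero => rfl
  | succ k ih =>
    rw [pow_succ, mul_left, ih, Finset.prod_range_succ, show (a ^ k).right = a.right ^ k from
      map_pow rightHom a k]

lemma Finset.prod_range_two_mul {M : Type*} [CommMonoid M] (f : ℕ → M) (n : ℕ) :
    ∏ k ∈ range (2 * n), f k = ∏ r ∈ range n, f (2 * r) * f (2 * r + 1) := by
  induction n with
  | zero => simp
  | succ n ih => rw [mul_add_one, prod_range_succ, prod_range_succ, prod_range_succ, ih, mul_assoc]

namespace CoxeterSystem

variable {M : CoxeterMatrix B} (cs : CoxeterSystem M W)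

local prefix:100 "s " => cs.simple
local prefix:100 "π " => cs.wordProd
local prefix:100 "ℓ " => cs.length
local prefix:100 "lis " => cs.leftInvSeq

open scoped Classical

lemma simple_mul_inv_pow (i j : B) (r : ℕ) :
    s i * (s i * s j)⁻¹ ^ r = (s i * s j) ^ r * s i := by
  refine SemiconjBy.pow_right ?_ r
  rw [SemiconjBy, mul_inv_rev, inv_simple, inv_simple, mul_assoc]

lemma pow_conj_pow_mul_simple (i j : B) (r k : ℕ) :
    (s i * s j) ^ r * ((s i * s j) ^ k * s i) * ((s i * s j) ^ r)⁻¹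
      = (s i * s j) ^ (2 * r + k) * s i := by
  rw [← inv_pow, mul_assoc, mul_assoc, simple_mul_inv_pow, ← mul_assoc, ← mul_assoc, ← pow_add,
    ← pow_add, two_mul, add_right_comm]

noncomputable def inversionGen (i : B) : (W → ℤˣ) ⋊[conjArrow W] W :=
  ⟨Pi.mulSingle (s i) (-1), s i⟩

/- With `c = s i * s j`, the left component of `(inversionGen i * inversionGen j) ^ m` is the
product of the indicators of `c ^ k * s i` over `k < 2 * m`; when `c ^ m = 1` every factor occurs
twice. -/
lemma isLiftable_inversionGen : M.IsLiftable cs.inversionGen := by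
  intro i j
  set c := s i * s j
  obtain ⟨δ, hδ⟩ : ∃ δ : ℕ → W → ℤˣ, ∀ k, δ k = Pi.mulSingle (c ^ k * s i) (-1) :=
    ⟨_, fun _ => rfl⟩
  have hgen : cs.inversionGen i * cs.inversionGen j = ⟨δ 0 * δ 1, c⟩ := by
    refine SemidirectProduct.ext ?_ rfl
    simp only [inversionGen, SemidirectProduct.mul_left, conjArrow_mulSingle, hδ, pow_zero,
      one_mul, pow_one, inv_simple]
    rfl
  have hconj (r k : ℕ) : conjArrow W (c ^ r) (δ k) = δ (2 * r + k) := by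
    rw [hδ, hδ, conjArrow_mulSingle, pow_conj_pow_mul_simple]
  have hc : c ^ M i j = 1 := cs.simple_mul_simple_pow i j
  have hperiod (k : ℕ) : δ (M i j + k) = δ k := by rw [hδ, hδ, pow_add, hc, one_mul]
  refine SemidirectProduct.ext ?_ ((map_pow SemidirectProduct.rightHom _ _).trans hc)
  rw [hgen, SemidirectProduct.left_pow]
  simp only [map_mul, hconj, add_zero]
  rw [← Finset.prod_range_two_mul, two_mul, Finset.prod_range_add]
  simp only [hperiod]
  funext t
  exact Int.units_mul_self _

noncomputable def inversionHom : W →* (W → ℤˣ) ⋊[conjArrow W] W :=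
  cs.lift ⟨cs.inversionGen, cs.isLiftable_inversionGen⟩

lemma inversionHom_simple (i : B) : cs.inversionHom (s i) = cs.inversionGen i :=
  cs.lift_apply_simple cs.isLiftable_inversionGen i

lemma right_inversionHom (w : W) : (cs.inversionHom w).right = w := by
  have : SemidirectProduct.rightHom.comp cs.inversionHom = MonoidHom.id W :=
    cs.ext_simple fun i => by simp [inversionHom_simple, inversionGen]
  exact DFunLike.congr_fun this w

noncomputable def inversionSign (w t : W) : ℤˣ := (cs.inversionHom w).left t

lemma inversionSign_mul (x y t : W) :
    cs.inversionSign (x * y) t = cs.inversionSign x t * cs.inversionSign y (x⁻¹ * t * x) := by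
  simp only [inversionSign, map_mul, SemidirectProduct.mul_left, Pi.mul_apply, right_inversionHom,
    conjArrow_apply]

lemma inversionSign_one (t : W) : cs.inversionSign 1 t = 1 := by
  simp [inversionSign]

lemma inversionSign_simple (i : B) : cs.inversionSign (s i) = Pi.mulSingle (s i) (-1) := by
  funext t
  simp [inversionSign, inversionHom_simple, inversionGen]

lemma count_leftInvSeq_cons (i : B) (ω : List B) (t : W) :
    (lis (i :: ω)).count t = (lis ω).count (s i * t * s i) + if s i = t then 1 else 0 := by
  have hconj : MulAut.conj (s i) (s i * t * s i) = t := by simp [mul_assoc]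
  rw [leftInvSeq, count_cons]
  nth_rw 1 [← hconj]
  rw [count_map_of_injective _ _ (MulAut.conj (s i)).injective]
  simp

lemma inversionSign_wordProd (ω : List B) (t : W) :
    cs.inversionSign (π ω) t = (-1) ^ (lis ω).count t := by
  induction ω generalizing t with
  | nil => simp [inversionSign_one]
  | cons i ω ih =>
    rw [wordProd_cons, inversionSign_mul, inversionSign_simple, ih, count_leftInvSeq_cons,
      pow_add, inv_simple, mul_comm]
    by_cases h : s i = t <;> simp [h]

lemma mem_leftInvSeq_of_inversionSign_eq_neg_one {ω : List B} {t : W}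
    (h : cs.inversionSign (π ω) t = -1) : t ∈ lis ω := by
  by_contra ht
  rw [inversionSign_wordProd, List.count_eq_zero_of_not_mem ht, pow_zero] at h
  exact absurd h (by decide)

lemma IsReflection.inversionSign_self {t : W} (ht : cs.IsReflection t) :
    cs.inversionSign t t = -1 := by
  obtain ⟨g, i, rfl⟩ := ht
  set t := g * s i * g⁻¹ with ht
  have hsimple : g⁻¹ * t * g = s i := by rw [ht]; group
  have hcancel : cs.inversionSign g t * cs.inversionSign g⁻¹ (s i) = 1 := by
    rw [← hsimple, ← inversionSign_mul, mul_inv_cancel, inversionSign_one]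
  calc cs.inversionSign t t
      = cs.inversionSign g t * cs.inversionSign (s i * g⁻¹) (g⁻¹ * t * g) := by
        rw [← inversionSign_mul, ht]; group
    _ = cs.inversionSign g t * (cs.inversionSign (s i) (s i) * cs.inversionSign g⁻¹ (s i)) := by
        rw [hsimple, inversionSign_mul, inv_simple, simple_mul_simple_cancel_right]
    _ = -1 := by
        rw [mul_left_comm, hcancel, inversionSign_simple, Pi.mulSingle_eq_same, mul_one]

lemma inversionSign_eq_neg_one_of_isLeftInversion {w t : W} (h : cs.IsLeftInversion w t) :
    cs.inversionSign w t = -1 := by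
  obtain ⟨ht, hlt⟩ := h
  by_contra hne
  have hsign : cs.inversionSign (t * w) t = -1 := by
    rw [inversionSign_mul, ht.inversionSign_self, show t⁻¹ * t * t = t by group,
      (Int.units_eq_one_or _).resolve_right hne, mul_one]
  obtain ⟨ω, hω, hprod⟩ := cs.exists_isReduced (t * w)
  rw [hprod] at hsign
  have hinv := (cs.isLeftInversion_of_mem_leftInvSeq hω
    (cs.mem_leftInvSeq_of_inversionSign_eq_neg_one hsign)).2
  rw [← hprod, ← mul_assoc, ht.mul_self, one_mul] at hinv
  exact lt_asymm hlt hinv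

theorem exists_wordProd_eraseIdx_eq_mul_of_isLeftInversion {ω : List B} {t : W}
    (h : cs.IsLeftInversion (π ω) t) : ∃ j < ω.length, π (ω.eraseIdx j) = t * π ω := by
  have hmem := cs.mem_leftInvSeq_of_inversionSign_eq_neg_one
    (cs.inversionSign_eq_neg_one_of_isLeftInversion h)
  obtain ⟨j, hj, rfl⟩ := List.mem_iff_getElem.mp hmem
  rw [length_leftInvSeq] at hj
  refine ⟨j, hj, ?_⟩
  rw [← getD_leftInvSeq_mul_wordProd, List.getD_eq_getElem]

theorem exists_wordProd_eraseIdx_eq_mul_of_isRightInversion {ω : List B} {t : W}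
    (h : cs.IsRightInversion (π ω) t) : ∃ j < ω.length, π (ω.eraseIdx j) = π ω * t := by
  have hconj : π ω * t * (π ω)⁻¹ * π ω = π ω * t := by group
  have hleft : cs.IsLeftInversion (π ω) (π ω * t * (π ω)⁻¹) :=
    ⟨h.1.conj _, by rw [hconj]; exact h.2⟩
  simpa only [hconj] using cs.exists_wordProd_eraseIdx_eq_mul_of_isLeftInversion hleft

lemma exists_reduced_sublist_of_length_mul_simple_lt {σ : List B} (hσ : cs.IsReduced σ) {i : B}
    (h : ℓ (π σ * s i) < ℓ (π σ)) : ∃ τ, τ <+ σ ∧ cs.IsReduced τ ∧ π τ = π σ * s i := by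
  obtain ⟨j, hj, hprod⟩ :=
    cs.exists_wordProd_eraseIdx_eq_mul_of_isRightInversion ⟨cs.isReflection_simple i, h⟩
  refine ⟨σ.eraseIdx j, eraseIdx_sublist σ j, ?_, hprod⟩
  have hlen := (cs.length_mul_simple (π σ) i).resolve_left (by omega)
  show ℓ (π (σ.eraseIdx j)) = (σ.eraseIdx j).length
  rw [hprod, length_eraseIdx_of_lt hj, ← hσ.eq]
  omega

theorem exists_reduced_sublist (ω : List B) : ∃ σ, σ <+ ω ∧ cs.IsReduced σ ∧ π σ = π ω := by
  induction ω using List.reverseRecOn with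
  | nil => exact ⟨[], Sublist.slnil, by simp [IsReduced], rfl⟩
  | append_singleton ω i ih =>
    obtain ⟨σ, hσω, hσ, hprod⟩ := ih
    rw [wordProd_append, wordProd_singleton, ← hprod]
    rcases cs.length_mul_simple (π σ) i with hlen | hlen
    · refine ⟨σ ++ [i], hσω.append (Sublist.refl _), ?_,
        by rw [wordProd_append, wordProd_singleton]⟩
      show ℓ (π (σ ++ [i])) = (σ ++ [i]).length
      rw [wordProd_append, wordProd_singleton, hlen, hσ.eq, length_append, length_singleton]
    · obtain ⟨τ, hτσ, hτ, hτprod⟩ :=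
        cs.exists_reduced_sublist_of_length_mul_simple_lt hσ (i := i) (by omega)
      exact ⟨τ, hτσ.trans (hσω.trans (sublist_append_left ω [i])), hτ, hτprod⟩

noncomputable def descend (i : B) (v : W) : W := if ℓ (v * s i) < ℓ v then v * s i else v

lemma descend_of_length_lt {v : W} {i : B} (h : ℓ v < ℓ (v * s i)) : cs.descend i v = v :=
  if_neg (by omega)

lemma descend_mul_simple {v : W} {i : B} (h : ℓ v < ℓ (v * s i)) :
    cs.descend i (v * s i) = v := by
  rw [descend, simple_mul_simple_cancel_right, if_pos h]

theorem foldr_descend_wordProd_eq_one {σ ρ : List B} (hσρ : σ <+ ρ) (hσ : cs.IsReduced σ) :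
    ρ.foldr cs.descend (π σ) = 1 := by
  induction ρ using List.reverseRecOn generalizing σ with
  | nil => rw [sublist_nil.mp hσρ]; rfl
  | append_singleton ρ j ih =>
    obtain ⟨σ', r, rfl, hσ'ρ, hr⟩ := sublist_append_iff.mp hσρ
    rw [foldr_append, foldr_cons, foldr_nil]
    rcases sublist_singleton.mp hr with rfl | rfl
    · rw [append_nil] at hσ ⊢
      by_cases hdesc : ℓ (π σ' * s j) < ℓ (π σ')
      · obtain ⟨τ, hτσ', hτ, hτprod⟩ :=
          cs.exists_reduced_sublist_of_length_mul_simple_lt hσ hdesc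
        rw [descend, if_pos hdesc, ← hτprod]
        exact ih (hτσ'.trans hσ'ρ) hτ
      · rw [descend, if_neg hdesc]
        exact ih hσ'ρ hσ
    · have hσ' : cs.IsReduced σ' := by simpa using hσ.take σ'.length
      have hlt : ℓ (π σ') < ℓ (π σ' * s j) := by
        have := hσ.eq
        rw [wordProd_append, wordProd_singleton, length_append, length_singleton] at this
        rw [this, hσ'.eq]
        omega
      rw [wordProd_append, wordProd_singleton, descend_mul_simple cs hlt]
      exact ih hσ'ρ hσ'

end CoxeterSystem

theorem BruhatLE.exists_sublist_wordProd_eq {M : CoxeterMatrix B} {cs : CoxeterSystem M W}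
    {v : W} {ω : List B} (h : BruhatLE cs v (cs.wordProd ω)) :
    ∃ σ, σ <+ ω ∧ cs.wordProd σ = v := by
  induction h using Relation.ReflTransGen.head_induction_on with
  | refl => exact ⟨ω, Sublist.refl ω, rfl⟩
  | @head u _ hstep _ ih =>
    obtain ⟨σ, hσω, hσ⟩ := ih
    obtain ⟨hlt, t, ht, rfl⟩ := hstep
    have ht : cs.IsReflection t := ht
    have hcancel : cs.wordProd σ * t = u := by rw [hσ, mul_assoc, ht.mul_self, mul_one]
    obtain ⟨j, -, hj⟩ := cs.exists_wordProd_eraseIdx_eq_mul_of_isRightInversion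
      ⟨ht, by rw [hcancel, hσ]; exact hlt⟩
    exact ⟨σ.eraseIdx j, (eraseIdx_sublist σ j).trans hσω, hj.trans hcancel⟩

theorem IsPositiveSubexpr.eq_foldr_descend {M : CoxeterMatrix B} {cs : CoxeterSystem M W}
    {ω : List B} {v : W} {vs : Fin (ω.length + 1) → W} (h : IsPositiveSubexpr cs ω v vs)
    (k : Fin (ω.length + 1)) : vs k = (ω.drop k).foldr cs.descend v := by
  induction k using Fin.reverseInduction with
  | last => rw [Fin.val_last, drop_length, foldr_nil]; exact h.2.1
  | cast j ih =>
    obtain ⟨hstep, hlt⟩ := h.2.2 j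
    rw [Fin.val_castSucc, drop_eq_getElem_cons j.isLt, foldr_cons, ← Fin.val_succ, ← ih,
      ← get_eq_getElem]
    rcases hstep with heq | heq
    · rw [heq, cs.descend_of_length_lt hlt]
    · rw [heq, cs.descend_mul_simple hlt]

theorem not_le_of_positive_subexpr_starts_with_simple_general
    {M : CoxeterMatrix B} (cs : CoxeterSystem M W)
    (i : B) (ω : List B) (v : W)
    (vs : Fin ((i :: ω).length + 1) → W)
    (hvs : IsPositiveSubexpr cs (i :: ω) v vs)
    (h1 : vs 1 = cs.simple i) :
    ¬ BruhatLE cs v (cs.simple i * cs.wordProd (i :: ω)) := by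
  intro hle
  rw [cs.wordProd_cons, cs.simple_mul_simple_cancel_left] at hle
  obtain ⟨σ, hσω, rfl⟩ := hle.exists_sublist_wordProd_eq
  obtain ⟨τ, hτσ, hτ, hτprod⟩ := cs.exists_reduced_sublist σ
  have hvs1 : vs 1 = 1 := by
    rw [hvs.eq_foldr_descend, ← hτprod]
    exact cs.foldr_descend_wordProd_eq_one (hτσ.trans hσω) hτ
  have hlen := cs.length_simple i
  rw [← h1, hvs1, cs.length_one] at hlen
  exact zero_ne_one hlen

/-- If the positive subexpression for `v` inside a reduced word `(i :: ω)` for `w`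
starts with `v_(1) = s_i`, then `v ≰ s_i * w`. -/
theorem not_le_of_positive_subexpr_starts_with_simple
    {M : CoxeterMatrix B} (cs : CoxeterSystem M W)
    (i : B) (ω : List B) (hred : cs.IsReduced (i :: ω)) (v : W)
    (hv : BruhatLE cs v (cs.wordProd (i :: ω)))
    (vs : Fin ((i :: ω).length + 1) → W)
    (hvs : IsPositiveSubexpr cs (i :: ω) v vs)
    (h1 : vs 1 = cs.simple i) :
    ¬ BruhatLE cs v (cs.simple i * cs.wordProd (i :: ω)) :=
  not_le_of_positive_subexpr_starts_with_simple_general cs i ω v vs hvs h1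
end
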